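/- arXiv:2603.27190 — 3 statements merged into one kernel-verified Lean document; each statement's English description precedes it below -/
import Mathlib

section
/- (Birthday/collision monotonicity) Let S be a finite nonempty set and D any probability distribution on S. For independent samples X₁,…,X_k drawn i.i.d. from D, the probability that some two of them collide (X_i = X_j for some i ≠ j) is at least the corresponding collision probability when X₁,…,X_k are drawn i.i.d. uniformly from S. -/
lemma tangent (k : ℕ) (x m : ℝ) (hx : 0 ≤ x) (hm : 0 ≤ m) :
    x ^ k * ((k + 1) * m - k * x) ≤ m ^ (k + 1) := by
  rcases eq_or_lt_of_le hx with h | h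
  · cases k with
    | zero => simp
    | succ j =>
      rw [← h]
      simp [zero_pow]
      positivity
  · have hb := one_add_mul_le_pow (a := m / x - 1) (by nlinarith [div_nonneg hm h.le]) (k + 1)
    have h2 : (1 + (m / x - 1)) ^ (k+1) = m ^ (k+1) / x ^ (k+1) := by
      rw [show 1 + (m / x - 1) = m / x by ring, div_pow]
    rw [h2] at hb
    have h3 : x ^ (k+1) > 0 := by positivity
    have := (mul_le_mul_of_nonneg_right hb h3.le)
    rw [div_mul_cancel₀ _ (ne_of_gt h3)] at this
    calc x ^ k * ((k + 1) * m - k * x)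
        = (1 + ((k:ℝ)+1) * (m / x - 1)) * x ^ (k+1) := by
          field_simp; ring
      _ ≤ m ^ (k+1) := by push_cast at this ⊢; linarith

lemma esymm_le {S : Type*} [DecidableEq S] (D : S → ℝ) :
    ∀ (A : Finset S), (∀ s ∈ A, 0 ≤ D s) → ∀ k : ℕ,
      (A.card : ℝ) ^ k * ∑ T ∈ A.powersetCard k, ∏ s ∈ T, D s
        ≤ (A.card.choose k : ℝ) * (∑ s ∈ A, D s) ^ k := by
  intro A
  induction A using Finset.induction_on with
  | empty =>
    intro _ k
    cases k with
    | zero => simp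
    | succ j => simp
  | insert _ _ ha IH =>
    rename_i a B
    intro hD k
    have ht : 0 ≤ D a := hD a (Finset.mem_insert_self a B)
    have hDB : ∀ s ∈ B, 0 ≤ D s := fun s hs => hD s (Finset.mem_insert_of_mem hs)
    have hτ : 0 ≤ ∑ s ∈ B, D s := Finset.sum_nonneg hDB
    cases k with
    | zero => simp
    | succ j =>
      -- split the sum
      have hsplit : ∑ T ∈ (insert a B).powersetCard (j+1), ∏ s ∈ T, D s
          = (∑ T ∈ B.powersetCard (j+1), ∏ s ∈ T, D s)
            + D a * ∑ T ∈ B.powersetCard j, ∏ s ∈ T, D s := by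
        rw [Finset.powersetCard_succ_insert ha, Finset.sum_union, Finset.sum_image]
        · rw [Finset.mul_sum]
          congr 1
          refine Finset.sum_congr rfl fun T hT => ?_
          have haT : a ∉ T := fun h => ha (Finset.mem_powersetCard.mp hT |>.1 h)
          rw [Finset.prod_insert haT]
        · intro T hT U hU h
          have haT : a ∉ T := fun h => ha (Finset.mem_powersetCard.mp hT |>.1 h)
          have haU : a ∉ U := fun h => ha (Finset.mem_powersetCard.mp hU |>.1 h)
          have : (insert a T).erase a = (insert a U).erase a := by rw [h]
          rwa [Finset.erase_insert haT, Finset.erase_insert haU] at this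
        · rw [Finset.disjoint_right]
          intro T hT hT'
          obtain ⟨U, hU, rfl⟩ := Finset.mem_image.mp hT
          exact ha (Finset.mem_powersetCard.mp hT' |>.1 (Finset.mem_insert_self a U))
      have hcard : (insert a B).card = B.card + 1 := Finset.card_insert_of_notMem ha
      have hsum : ∑ s ∈ insert a B, D s = D a + ∑ s ∈ B, D s := Finset.sum_insert ha
      rw [hsplit, hcard, hsum]
      set t := D a with htdef
      set τ := ∑ s ∈ B, D s with hτdef
      set b := B.card with hbdef
      set E := ∑ T ∈ B.powersetCard (j+1), ∏ s ∈ T, D s with hEdef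
      set F := ∑ T ∈ B.powersetCard j, ∏ s ∈ T, D s with hFdef
      have hF0 : 0 ≤ F := Finset.sum_nonneg fun T hT =>
        Finset.prod_nonneg fun s hs => hDB s (Finset.mem_powersetCard.mp hT |>.1 hs)
      have hE0 : 0 ≤ E := Finset.sum_nonneg fun T hT =>
        Finset.prod_nonneg fun s hs => hDB s (Finset.mem_powersetCard.mp hT |>.1 hs)
      rcases Nat.eq_zero_or_pos b with hb0 | hbpos
      · -- B is empty
        have hBe : B = ∅ := Finset.card_eq_zero.mp hb0
        have hτ0 : τ = 0 := by rw [hτdef, hBe, Finset.sum_empty]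
        have hE' : E = 0 := by
          rw [hEdef, hBe]
          rw [Finset.powersetCard_eq_empty.mpr (by simp), Finset.sum_empty]
        cases j with
        | zero =>
          have hF' : F = 1 := by
            rw [hFdef, hBe, Finset.powersetCard_zero]
            simp
          rw [hE', hF', hτ0, hb0]
          norm_num
        | succ i =>
          have hF' : F = 0 := by
            rw [hFdef, hBe]
            rw [Finset.powersetCard_eq_empty.mpr (by simp), Finset.sum_empty]
          rw [hE', hF', hτ0, hb0]
          norm_num
          positivity
      · -- main case : b ≥ 1
        have IH1 : (b:ℝ)^(j+1) * E ≤ (b.choose (j+1) : ℝ) * τ^(j+1) := IH hDB (j+1)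
        have IH2 : (b:ℝ)^j * F ≤ (b.choose j : ℝ) * τ^j := IH hDB j
        set σ : ℝ := t + τ with hσ
        have hσ0 : 0 ≤ σ := by positivity
        -- cast identities
        have id1 : ((j:ℝ)+1) * (b.choose (j+1) : ℝ) = ((b:ℝ) - j) * (b.choose j : ℝ) := by
          have h := Nat.choose_succ_right_eq b j
          rcases le_or_gt j b with hjb | hjb
          · have := congrArg (fun x : ℕ => (x:ℝ)) h
            push_cast [Nat.cast_sub hjb] at this
            push_cast
            linarith
          · have h1 : b.choose (j+1) = 0 := Nat.choose_eq_zero_of_lt (by omega)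
            have h2 : b.choose j = 0 := Nat.choose_eq_zero_of_lt hjb
            rw [h1, h2]; push_cast; ring
        have id2 : ((b:ℝ)+1) * (b.choose j : ℝ) = ((j:ℝ)+1) * ((b+1).choose (j+1) : ℝ) := by
          have h := Nat.add_one_mul_choose_eq b j
          have := congrArg (fun x : ℕ => (x:ℝ)) h
          push_cast at this
          push_cast
          linarith
        have htan := tangent j (((b:ℝ)+1) * τ) ((b:ℝ) * σ) (by positivity) (by positivity)
        -- main chain, multiplied by (j+1) * b^(j+1)
        have hkey : (((j:ℝ)+1) * (b:ℝ)^(j+1)) * (((b:ℝ)+1)^(j+1) * (E + t * F))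
            ≤ (((j:ℝ)+1) * (b:ℝ)^(j+1)) * (((b+1).choose (j+1) : ℝ) * σ^(j+1)) := by
          have hA : (0:ℝ) ≤ ((b:ℝ)+1)^(j+1) := by positivity
          have step1 : (((j:ℝ)+1) * (b:ℝ)^(j+1)) * (((b:ℝ)+1)^(j+1) * (E + t * F))
              = ((b:ℝ)+1)^(j+1) * (((j:ℝ)+1) * ((b:ℝ)^(j+1) * E)
                  + ((j:ℝ)+1) * t * (b:ℝ) * ((b:ℝ)^j * F)) := by ring
          have step2 : ((b:ℝ)+1)^(j+1) * (((j:ℝ)+1) * ((b:ℝ)^(j+1) * E)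
                  + ((j:ℝ)+1) * t * (b:ℝ) * ((b:ℝ)^j * F))
              ≤ ((b:ℝ)+1)^(j+1) * (((j:ℝ)+1) * ((b.choose (j+1) : ℝ) * τ^(j+1))
                  + ((j:ℝ)+1) * t * (b:ℝ) * ((b.choose j : ℝ) * τ^j)) := by
            apply mul_le_mul_of_nonneg_left _ hA
            have h1 := mul_le_mul_of_nonneg_left IH1 (show (0:ℝ) ≤ (j:ℝ)+1 by positivity)
            have h2 := mul_le_mul_of_nonneg_left IH2
              (show (0:ℝ) ≤ ((j:ℝ)+1) * t * (b:ℝ) by positivity)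
            nlinarith [h1, h2]
          have step3 : ((b:ℝ)+1)^(j+1) * (((j:ℝ)+1) * ((b.choose (j+1) : ℝ) * τ^(j+1))
                  + ((j:ℝ)+1) * t * (b:ℝ) * ((b.choose j : ℝ) * τ^j))
              = ((b.choose j : ℝ) * ((b:ℝ)+1)) *
                  ((((b:ℝ)+1) * τ)^j * (((j:ℝ)+1) * ((b:ℝ) * σ) - (j:ℝ) * (((b:ℝ)+1) * τ))) := by
            rw [mul_pow]
            rw [hσ]
            linear_combination (((b:ℝ)+1)^(j+1) * τ^(j+1)) * id1
          have step4 : ((b.choose j : ℝ) * ((b:ℝ)+1)) *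
                  ((((b:ℝ)+1) * τ)^j * (((j:ℝ)+1) * ((b:ℝ) * σ) - (j:ℝ) * (((b:ℝ)+1) * τ)))
              ≤ ((b.choose j : ℝ) * ((b:ℝ)+1)) * ((b:ℝ) * σ)^(j+1) := by
            apply mul_le_mul_of_nonneg_left htan (by positivity)
          have step5 : ((b.choose j : ℝ) * ((b:ℝ)+1)) * ((b:ℝ) * σ)^(j+1)
              = (((j:ℝ)+1) * (b:ℝ)^(j+1)) * (((b+1).choose (j+1) : ℝ) * σ^(j+1)) := by
            rw [mul_pow]
            linear_combination ((b:ℝ)^(j+1) * σ^(j+1)) * id2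
          calc (((j:ℝ)+1) * (b:ℝ)^(j+1)) * (((b:ℝ)+1)^(j+1) * (E + t * F))
              = _ := step1
            _ ≤ _ := step2
            _ = _ := step3
            _ ≤ _ := step4
            _ = _ := step5
        have hpos : (0:ℝ) < ((j:ℝ)+1) * (b:ℝ)^(j+1) := by
          have : (0:ℝ) < (b:ℝ) := by exact_mod_cast hbpos
          positivity
        have := le_of_mul_le_mul_left hkey hpos
        push_cast at this ⊢
        convert this using 2 <;> push_cast <;> ring


lemma group_lemma {S : Type*} [Fintype S] [DecidableEq S] (k : ℕ) (D : S → ℝ) :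
    ∑ f ∈ Finset.univ.filter (fun f : Fin k → S => Function.Injective f), ∏ i, D (f i)
      = (k.factorial : ℝ) * ∑ T ∈ (Finset.univ : Finset S).powersetCard k, ∏ s ∈ T, D s := by
  rw [Finset.mul_sum]
  rw [← Finset.sum_fiberwise_of_maps_to (g := fun f : Fin k → S => Finset.image f Finset.univ)
    (t := (Finset.univ : Finset S).powersetCard k) ?_ (fun f => ∏ i, D (f i))]
  · refine Finset.sum_congr rfl fun T hT => ?_
    obtain ⟨hTsub, hTcard⟩ := Finset.mem_powersetCard.mp hT
    have hconst : ∀ f ∈ (Finset.univ.filter (fun f : Fin k → S => Function.Injective f)).filter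
        (fun f => Finset.image f Finset.univ = T), ∏ i, D (f i) = ∏ s ∈ T, D s := by
      intro f hf
      simp only [Finset.mem_filter, Finset.mem_univ, true_and] at hf
      obtain ⟨hinj, himg⟩ := hf
      rw [← himg, Finset.prod_image (fun i _ j _ h => hinj h)]
    rw [Finset.sum_congr rfl hconst, Finset.sum_const, nsmul_eq_mul]
    congr 1
    -- count the fiber: number of injective functions with image T is k!
    norm_cast
    have hcount : ((Finset.univ.filter (fun f : Fin k → S => Function.Injective f)).filter
        (fun f => Finset.image f Finset.univ = T)).card
        = Fintype.card {f : Fin k → S // Function.Injective f ∧ Finset.image f Finset.univ = T} := by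
      rw [Fintype.card_subtype]
      congr 1
      ext f
      simp [Finset.mem_filter, and_assoc]
    rw [hcount]
    have hcardT : Fintype.card {x // x ∈ T} = k := by
      rw [Fintype.card_coe, hTcard]
    -- build equivalence with embeddings Fin k ↪ T
    have e : {f : Fin k → S // Function.Injective f ∧ Finset.image f Finset.univ = T}
        ≃ (Fin k ↪ {x // x ∈ T}) := by
      refine ⟨fun f => ⟨fun i => ⟨f.1 i, ?_⟩, ?_⟩, fun g => ⟨fun i => (g i).1, ?_, ?_⟩, ?_, ?_⟩
      · have hm : f.1 i ∈ Finset.image f.1 Finset.univ :=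
          Finset.mem_image_of_mem f.1 (Finset.mem_univ i)
        rwa [f.2.2] at hm
      · intro i j h
        exact f.2.1 (congrArg Subtype.val h)
      · intro i j h
        exact g.injective (Subtype.ext h)
      · -- image = T
        apply Finset.eq_of_subset_of_card_le
        · intro s hs
          obtain ⟨i, _, rfl⟩ := Finset.mem_image.mp hs
          exact (g i).2
        · rw [hTcard, Finset.card_image_of_injective _ (fun i j h => g.injective (Subtype.ext h))]
          simp
      · intro f; rfl
      · intro g; rfl
    rw [Fintype.card_congr e, Fintype.card_embedding_eq, Fintype.card_fin, hcardT,
      Nat.descFactorial_self]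
  · intro f hf
    simp only [Finset.mem_filter, Finset.mem_univ, true_and] at hf
    rw [Finset.mem_powersetCard]
    exact ⟨Finset.subset_univ _, by rw [Finset.card_image_of_injective _ hf]; simp⟩

lemma total_one {S : Type*} [Fintype S] [DecidableEq S] (k : ℕ) (P : S → ℝ)
    (hP : ∑ s, P s = 1) :
    ∑ x ∈ (Finset.univ : Finset (Fin k → S)), ∏ i, P (x i) = 1 := by
  rw [← Fintype.piFinset_univ, ← Finset.prod_univ_sum]
  simp [hP]

/-- Birthday/collision monotonicity: for i.i.d. samples X₁,…,X_k from any distribution D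
on a finite nonempty set S, the probability of a collision (some two samples equal) is at
least the collision probability for i.i.d. uniform samples. -/
theorem stmt6 {S : Type*} [Fintype S] [DecidableEq S] [Nonempty S]
    (D : S → ℝ) (hD0 : ∀ s, 0 ≤ D s) (hD1 : ∑ s, D s = 1) (k : ℕ) :
    ∑ x ∈ Finset.univ.filter (fun x : Fin k → S => ¬ Function.Injective x),
        ∏ _i : Fin k, (1 / (Fintype.card S : ℝ))
      ≤ ∑ x ∈ Finset.univ.filter (fun x : Fin k → S => ¬ Function.Injective x),
          ∏ i : Fin k, D (x i) := by
  set n := Fintype.card S with hn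
  have hnpos : 0 < n := Fintype.card_pos
  have hnR : (0:ℝ) < (n:ℝ) := by exact_mod_cast hnpos
  set U : S → ℝ := fun _ => 1 / (n:ℝ) with hU
  have hU1 : ∑ s, U s = 1 := by
    simp [hU, Finset.sum_const, hn]
  -- rewrite the LHS in the same shape
  have hLHS : ∑ x ∈ Finset.univ.filter (fun x : Fin k → S => ¬ Function.Injective x),
        ∏ _i : Fin k, (1 / ((n:ℝ)))
      = ∑ x ∈ Finset.univ.filter (fun x : Fin k → S => ¬ Function.Injective x),
        ∏ i : Fin k, U (x i) := rfl
  rw [hLHS]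
  -- complement identities
  have key : ∀ P : S → ℝ, (∑ s, P s = 1) →
      ∑ x ∈ Finset.univ.filter (fun x : Fin k → S => ¬ Function.Injective x), ∏ i, P (x i)
        = 1 - ∑ x ∈ Finset.univ.filter (fun x : Fin k → S => Function.Injective x),
            ∏ i, P (x i) := by
    intro P hP
    have := Finset.sum_filter_add_sum_filter_not (Finset.univ : Finset (Fin k → S))
      (fun x => Function.Injective x) (fun x => ∏ i, P (x i))
    rw [total_one k P hP] at this
    linarith
  rw [key U hU1, key D hD1]
  have hmain : ∑ x ∈ Finset.univ.filter (fun x : Fin k → S => Function.Injective x),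
        ∏ i, D (x i)
      ≤ ∑ x ∈ Finset.univ.filter (fun x : Fin k → S => Function.Injective x),
        ∏ i, U (x i) := by
    rw [group_lemma k D, group_lemma k U]
    have hfac : (0:ℝ) ≤ (k.factorial : ℝ) := by positivity
    apply mul_le_mul_of_nonneg_left _ hfac
    -- e_k(D) ≤ e_k(U) = C(n,k)/n^k
    have hD := esymm_le D Finset.univ (fun s _ => hD0 s) k
    rw [Finset.card_univ, ← hn, hD1, one_pow, mul_one] at hD
    have hUval : ∑ T ∈ (Finset.univ : Finset S).powersetCard k, ∏ s ∈ T, U s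
        = (n.choose k : ℝ) / (n:ℝ)^k := by
      have : ∀ T ∈ (Finset.univ : Finset S).powersetCard k, ∏ s ∈ T, U s = (1/(n:ℝ))^k := by
        intro T hT
        rw [Finset.prod_const, (Finset.mem_powersetCard.mp hT).2]
      rw [Finset.sum_congr rfl this, Finset.sum_const, Finset.card_powersetCard,
        Finset.card_univ, ← hn, nsmul_eq_mul]
      rw [div_pow, one_pow]
      ring
    rw [hUval]
    rw [le_div_iff₀ (by positivity)]
    linarith [hD]
  linarith
end

section
/- Let r > 0 and q ∈ ℕ, q ≥ 1. Define ρ = (∑_{x∈ℤ} cos(2πx/q) e^{−πx²/r²}) / (∑_{x∈ℤ} e^{−πx²/r²}). Then ρ ≥ e^{−πr²/q²}. -/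
open Real

lemma gaussSummable (a : ℝ) {t : ℝ} (ht : 0 < t) :
    Summable fun n : ℤ => Real.exp (-π * ((n : ℝ) + a) ^ 2 * t) := by
  have := HurwitzKernelBounds.summable_f_int 0 a ht
  refine this.congr fun n => ?_
  simp [HurwitzKernelBounds.f_int]

/-- For r > 0 and q ≥ 1, the quantity
ρ = (∑_{x∈ℤ} cos(2πx/q) e^{−πx²/r²}) / (∑_{x∈ℤ} e^{−πx²/r²})
satisfies ρ ≥ e^{−πr²/q²}. -/
theorem stmt13 (r : ℝ) (hr : 0 < r) (q : ℕ) (hq : 1 ≤ q) :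
    Real.exp (-Real.pi * r ^ 2 / (q : ℝ) ^ 2) ≤
      (∑' x : ℤ, Real.cos (2 * Real.pi * (x : ℝ) / q) *
          Real.exp (-Real.pi * (x : ℝ) ^ 2 / r ^ 2)) /
        (∑' x : ℤ, Real.exp (-Real.pi * (x : ℝ) ^ 2 / r ^ 2)) := by
  have hr2 : (0:ℝ) < r ^ 2 := by positivity
  have ha : (0:ℝ) < 1 / r ^ 2 := by positivity
  -- rpow computation
  have hrpow : ((1 / r ^ 2 : ℝ)) ^ ((1:ℝ)/2) = 1 / r := by
    rw [one_div, Real.inv_rpow hr2.le, ← Real.rpow_natCast r 2, ← Real.rpow_mul hr.le]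
    norm_num
  -- summability of shifted Gaussians
  have hSg : ∀ s : ℝ, Summable fun n : ℤ => Real.exp (-(π * r ^ 2) * ((n : ℝ) + s) ^ 2) := by
    intro s
    refine (gaussSummable s hr2).congr fun n => ?_
    congr 1
    ring
  -- denominator transform
  have hD : (∑' x : ℤ, Real.exp (-π * (x : ℝ) ^ 2 / r ^ 2))
      = r * ∑' n : ℤ, Real.exp (-(π * r ^ 2) * ((n:ℝ) + 0) ^ 2) := by
    have h1 : ∀ x : ℤ, -π * (x : ℝ) ^ 2 / r ^ 2 = -π * (1 / r ^ 2) * (x:ℝ) ^ 2 := by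
      intro x; field_simp
    simp_rw [h1]
    rw [Real.tsum_exp_neg_mul_int_sq ha, hrpow]
    rw [one_div_one_div]
    congr 1
    refine tsum_congr fun n => ?_
    congr 1
    field_simp
    ring
  -- numerator transform via Poisson summation
  have hb : (0:ℝ) < (((1 / r ^ 2 : ℝ) : ℂ)).re := by rw [Complex.ofReal_re]; exact ha
  have key := Complex.tsum_exp_neg_quadratic hb (Complex.I / q)
  have hcpow : (((1 / r ^ 2 : ℝ) : ℂ)) ^ ((1:ℂ)/2) = ((1 / r : ℝ) : ℂ) := by
    have : ((1:ℂ)/2) = ((1/2 : ℝ) : ℂ) := by norm_num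
    rw [this, ← Complex.ofReal_cpow ha.le, hrpow]
  have hterm : ∀ n : ℤ, Complex.exp (-π / (((1 / r ^ 2 : ℝ) : ℂ)) * ((n:ℂ) + Complex.I * (Complex.I / q)) ^ 2)
      = ((Real.exp (-(π * r ^ 2) * ((n:ℝ) + (-(1/(q:ℝ)))) ^ 2) : ℝ) : ℂ) := by
    intro n
    rw [Complex.ofReal_exp]
    congr 1
    have h1 : (n:ℂ) + Complex.I * (Complex.I / q) = (((n:ℝ) + (-(1/(q:ℝ))) : ℝ) : ℂ) := by
      push_cast
      rw [mul_div_assoc', Complex.I_mul_I]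
      ring
    rw [h1]
    push_cast
    rw [div_div_eq_mul_div]
    ring
  have hform : ∀ n : ℤ, -(π:ℂ) * ((1/r^2:ℝ):ℂ) * (n:ℂ)^2 + 2*(π:ℂ)*(Complex.I/(q:ℂ))*(n:ℂ)
      = ((-π * (n:ℝ)^2 / r^2 : ℝ) : ℂ) + ((2*π*(n:ℝ)/q : ℝ):ℂ)*Complex.I := by
    intro n; push_cast; ring
  have hfs : Summable (fun n : ℤ => Complex.exp (-(π:ℂ) * ((1/r^2:ℝ):ℂ) * (n:ℂ)^2 + 2*(π:ℂ)*(Complex.I/(q:ℂ))*(n:ℂ))) := by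
    apply Summable.of_norm
    refine ((gaussSummable 0 ha).congr fun n => ?_)
    rw [hform n, Complex.norm_exp]
    simp only [Complex.add_re, Complex.ofReal_re, Complex.mul_re, Complex.I_re, Complex.ofReal_im,
      Complex.I_im, mul_zero, mul_one, zero_sub]
    congr 1
    field_simp
    ring
  have hNre : (∑' n : ℤ, Complex.exp (-(π:ℂ) * ((1/r^2:ℝ):ℂ) * (n:ℂ)^2 + 2*(π:ℂ)*(Complex.I/(q:ℂ))*(n:ℂ))).re
      = ∑' x : ℤ, Real.cos (2 * π * (x : ℝ) / q) * Real.exp (-π * (x : ℝ) ^ 2 / r ^ 2) := by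
    rw [Complex.re_tsum hfs]
    refine tsum_congr fun n => ?_
    rw [hform n, Complex.exp_re]
    simp only [Complex.add_re, Complex.ofReal_re, Complex.mul_re, Complex.I_re, Complex.ofReal_im,
      Complex.I_im, Complex.add_im, Complex.mul_im, Complex.ofReal_im, mul_zero, mul_one, zero_sub,
      sub_zero, zero_add, zero_mul, add_zero, neg_zero]
    ring
  have hN : (∑' x : ℤ, Real.cos (2 * π * (x : ℝ) / q) * Real.exp (-π * (x : ℝ) ^ 2 / r ^ 2))
      = r * ∑' n : ℤ, Real.exp (-(π * r ^ 2) * ((n:ℝ) + (-(1/(q:ℝ)))) ^ 2) := by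
    rw [← hNre, key, hcpow, tsum_congr hterm, ← Complex.ofReal_tsum]
    rw [show (1 : ℂ) / ((1 / r : ℝ) : ℂ) = ((r : ℝ) : ℂ) by push_cast; field_simp]
    rw [← Complex.ofReal_mul, Complex.ofReal_re]
  rw [hN, hD, mul_div_mul_left _ _ hr.ne']
  have hD1pos : 0 < ∑' n : ℤ, Real.exp (-(π * r ^ 2) * ((n:ℝ) + 0) ^ 2) :=
    Summable.tsum_pos (hSg 0) (fun n => (Real.exp_pos _).le) 0 (Real.exp_pos _)
  rw [le_div_iff₀ hD1pos]
  -- symmetrization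
  have hsymm : (∑' n : ℤ, Real.exp (-(π * r ^ 2) * ((n:ℝ) + (1/(q:ℝ))) ^ 2))
      = ∑' n : ℤ, Real.exp (-(π * r ^ 2) * ((n:ℝ) + (-(1/(q:ℝ)))) ^ 2) := by
    rw [← (Equiv.neg ℤ).tsum_eq (fun n : ℤ => Real.exp (-(π * r ^ 2) * ((n:ℝ) + (-(1/(q:ℝ)))) ^ 2))]
    refine tsum_congr fun n => ?_
    simp only [Equiv.neg_apply]
    congr 1
    push_cast
    ring
  have h2 : 2 * (Real.exp (-π * r ^ 2 / (q:ℝ) ^ 2) * ∑' n : ℤ, Real.exp (-(π * r ^ 2) * ((n:ℝ) + 0) ^ 2))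
      ≤ 2 * ∑' n : ℤ, Real.exp (-(π * r ^ 2) * ((n:ℝ) + (-(1/(q:ℝ)))) ^ 2) := by
    calc 2 * (Real.exp (-π * r ^ 2 / (q:ℝ) ^ 2) * ∑' n : ℤ, Real.exp (-(π * r ^ 2) * ((n:ℝ) + 0) ^ 2))
        = ∑' n : ℤ, 2 * (Real.exp (-π * r ^ 2 / (q:ℝ) ^ 2) * Real.exp (-(π * r ^ 2) * ((n:ℝ) + 0) ^ 2)) := by
          rw [tsum_mul_left, tsum_mul_left]
      _ ≤ ∑' n : ℤ, (Real.exp (-(π * r ^ 2) * ((n:ℝ) + (-(1/(q:ℝ)))) ^ 2)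
            + Real.exp (-(π * r ^ 2) * ((n:ℝ) + (1/(q:ℝ))) ^ 2)) := by
          refine Summable.tsum_le_tsum (fun n => ?_)
            (((hSg 0).mul_left _).mul_left 2) ((hSg _).add (hSg _))
          have hAe : -(π * r ^ 2) * ((n:ℝ) + (-(1/(q:ℝ)))) ^ 2
              = (-π * r ^ 2 / (q:ℝ) ^ 2 + -(π * r ^ 2) * ((n:ℝ) + 0) ^ 2) + (2*π*r^2*(n:ℝ)/(q:ℝ)) := by
            ring
          have hBe : -(π * r ^ 2) * ((n:ℝ) + (1/(q:ℝ))) ^ 2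
              = (-π * r ^ 2 / (q:ℝ) ^ 2 + -(π * r ^ 2) * ((n:ℝ) + 0) ^ 2) + -(2*π*r^2*(n:ℝ)/(q:ℝ)) := by
            ring
          have e1 : Real.exp (-(π * r ^ 2) * ((n:ℝ) + (-(1/(q:ℝ)))) ^ 2)
              = Real.exp (-π * r ^ 2 / (q:ℝ) ^ 2 + -(π * r ^ 2) * ((n:ℝ) + 0) ^ 2)
                * Real.exp (2*π*r^2*(n:ℝ)/(q:ℝ)) := by
            rw [hAe, Real.exp_add]
          have e2 : Real.exp (-(π * r ^ 2) * ((n:ℝ) + (1/(q:ℝ))) ^ 2)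
              = Real.exp (-π * r ^ 2 / (q:ℝ) ^ 2 + -(π * r ^ 2) * ((n:ℝ) + 0) ^ 2)
                * Real.exp (-(2*π*r^2*(n:ℝ)/(q:ℝ))) := by
            rw [hBe, Real.exp_add]
          have e0 : Real.exp (-π * r ^ 2 / (q:ℝ) ^ 2) * Real.exp (-(π * r ^ 2) * ((n:ℝ) + 0) ^ 2)
              = Real.exp (-π * r ^ 2 / (q:ℝ) ^ 2 + -(π * r ^ 2) * ((n:ℝ) + 0) ^ 2) :=
            (Real.exp_add _ _).symm
          have hc := Real.one_le_cosh (2*π*r^2*(n:ℝ)/(q:ℝ))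
          rw [Real.cosh_eq] at hc
          have hp := Real.exp_pos (-π * r ^ 2 / (q:ℝ) ^ 2 + -(π * r ^ 2) * ((n:ℝ) + 0) ^ 2)
          rw [e0, e1, e2]
          nlinarith
      _ = (∑' n : ℤ, Real.exp (-(π * r ^ 2) * ((n:ℝ) + (-(1/(q:ℝ)))) ^ 2))
            + ∑' n : ℤ, Real.exp (-(π * r ^ 2) * ((n:ℝ) + (1/(q:ℝ))) ^ 2) :=
          Summable.tsum_add (hSg _) (hSg _)
      _ = 2 * ∑' n : ℤ, Real.exp (-(π * r ^ 2) * ((n:ℝ) + (-(1/(q:ℝ)))) ^ 2) := by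
          rw [hsymm]; ring
  linarith
end

section
/- Let P(x₁,…,x_m) = ∑_{S⊆[m]} a_S ∏_{i∈S} x_i be a multilinear polynomial that is a sum of μ monomials each of degree at most T, where T | m. For a uniformly random equipartition π = (π₁,…,π_T) of [m] into T blocks of equal size, say π shatters S if |S ∩ π_j| ≤ 1 for every j. Then with probability at least exp(−2T) over the choice of π, the number of monomials S of P that are shattered by π is at least 0.5·μ·exp(−T). -/
open Finset



lemma pow_le_factorial_mul_exp (T : ℕ) : (T:ℝ)^T ≤ T.factorial * Real.exp T := by
  have h := Real.sum_le_exp_of_nonneg (x := (T:ℝ)) (by positivity) (T+1)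
  have h2 : (T:ℝ)^T / T.factorial ≤ ∑ i ∈ range (T+1), (T:ℝ)^i / i.factorial := by
    refine Finset.single_le_sum (f := fun i => (T:ℝ)^i / i.factorial) ?_ (self_mem_range_succ T)
    intro i _; positivity
  have hf : (0:ℝ) < T.factorial := by exact_mod_cast T.factorial_pos
  have := h2.trans h
  rw [div_le_iff₀ hf] at this
  linarith

section
variable {m T : ℕ}

/-- shattering predicate (decidable form of injectivity on S) -/
def sh (π : Fin m → Fin T) (S : Finset (Fin m)) : Prop :=
  ∀ a ∈ S, ∀ b ∈ S, π a = π b → a = b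

instance (π : Fin m → Fin T) (S : Finset (Fin m)) : Decidable (sh π S) := by
  unfold sh; infer_instance

lemma sh_iff (π : Fin m → Fin T) (S : Finset (Fin m)) :
    (∀ j : Fin T, (S.filter (fun i => π i = j)).card ≤ 1) ↔ sh π S := by
  constructor
  · intro h a ha b hb hab
    have := Finset.card_le_one.mp (h (π b))
    exact this a (mem_filter.mpr ⟨ha, hab⟩) b (mem_filter.mpr ⟨hb, rfl⟩)
  · intro h j
    refine Finset.card_le_one.mpr ?_
    intro a ha b hb
    simp only [mem_filter] at ha hb
    exact h a ha.1 b hb.1 (ha.2.trans hb.2.symm)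

lemma fiber_card {π : Fin m → Fin T}
    (hπ : ∀ j : Fin T, (univ.filter (fun i => π i = j)).card = m / T)
    (B : Finset (Fin T)) :
    (univ.filter (fun i => π i ∈ B)).card = B.card * (m / T) := by
  rw [Finset.card_eq_sum_card_fiberwise (f := π) (s := univ.filter (fun i => π i ∈ B)) (t := B)
    (fun i hi => (mem_filter.mp hi).2)]
  rw [Finset.sum_congr rfl (fun j hj => ?_), Finset.sum_const, smul_eq_mul]
  rw [Finset.filter_filter, ← hπ j]
  congr 1
  apply Finset.filter_congr
  intro i _
  constructor
  · exact fun h => h.2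
  · exact fun h => ⟨h ▸ hj, h⟩

lemma perm_mem_parts {π : Fin m → Fin T} (e : Equiv.Perm (Fin m))
    (hπ : ∀ j : Fin T, (univ.filter (fun i => π i = j)).card = m / T) :
    ∀ j : Fin T, (univ.filter (fun i => π (e i) = j)).card = m / T := by
  intro j
  have : univ.filter (fun i => π (e i) = j)
      = (univ.filter (fun i => π i = j)).map e.symm.toEmbedding := by
    ext i
    rw [Finset.mem_map_equiv]
    simp
  rw [this, Finset.card_map, hπ j]

end

def PartsF (m T : ℕ) : Finset (Fin m → Fin T) :=
  univ.filter (fun π => ∀ j : Fin T, (univ.filter (fun i => π i = j)).card = m / T)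

def ShatF (m T : ℕ) (S : Finset (Fin m)) : Finset (Fin m → Fin T) :=
  (PartsF m T).filter (fun π => sh π S)

lemma step {m T : ℕ} (x : Fin m) (S : Finset (Fin m)) (hx : x ∉ S) :
    (ShatF m T S).card * ((T - S.card) * (m / T)) ≤ (ShatF m T (insert x S)).card * m := by
  classical
  set P := ShatF m T S with hP
  set Q := ShatF m T (insert x S) with hQ
  set Pairs : Finset (Σ _ : (Fin m → Fin T), Fin m) :=
    P.sigma (fun π => univ.filter (fun y => ∀ s ∈ S, π y ≠ π s)) with hPairs
  have hcard : Pairs.card = P.card * ((T - S.card) * (m / T)) := by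
    rw [hPairs, Finset.card_sigma]
    rw [Finset.sum_congr rfl (fun π hπ => ?_), Finset.sum_const, smul_eq_mul]
    · -- fiber count for fixed π ∈ P
      have hπP : π ∈ PartsF m T := (mem_filter.mp hπ).1
      have hπparts := (mem_filter.mp hπP).2
      have hsh : sh π S := (mem_filter.mp hπ).2
      have heq : univ.filter (fun y => ∀ s ∈ S, π y ≠ π s)
          = univ.filter (fun y => π y ∈ (S.image π)ᶜ) := by
        apply Finset.filter_congr
        intro y _
        simp only [Finset.mem_compl, Finset.mem_image, not_exists, not_and]
        constructor
        · intro h s hs hss; exact h s hs hss.symm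
        · intro h s hs hss; exact h s hs hss.symm
      rw [heq, fiber_card hπparts]
      congr 1
      rw [Finset.card_compl, Finset.card_image_of_injOn (fun a ha b hb => hsh a ha b hb)]
      simp
  have hinj : Pairs.card ≤ (Q ×ˢ (univ : Finset (Fin m))).card := by
    apply Finset.card_le_card_of_injOn
      (fun p => (p.1 ∘ Equiv.swap x p.2, p.2))
    · rintro ⟨π, y⟩ hp
      simp only [Finset.mem_coe, hPairs, Finset.mem_sigma, mem_filter, mem_univ, true_and] at hp
      obtain ⟨hπ, hy⟩ := hp
      have hπP : π ∈ PartsF m T := (mem_filter.mp hπ).1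
      have hπparts := (mem_filter.mp hπP).2
      have hsh : sh π S := (mem_filter.mp hπ).2
      have hyS : y ∉ S := fun h => hy y h rfl
      have hsw : ∀ s ∈ S, Equiv.swap x y s = s := fun s hs =>
        Equiv.swap_apply_of_ne_of_ne (fun h => hx (h ▸ hs)) (fun h => hyS (h ▸ hs))
      refine Finset.mem_product.mpr ⟨?_, mem_univ _⟩
      rw [hQ, ShatF, mem_filter]
      constructor
      · exact mem_filter.mpr ⟨mem_univ _, perm_mem_parts (Equiv.swap x y) hπparts⟩
      · intro a ha b hb hab
        simp only [Function.comp_apply] at hab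
        rcases Finset.mem_insert.mp ha with rfl | haS <;>
          rcases Finset.mem_insert.mp hb with rfl | hbS
        · rfl
        · rw [Equiv.swap_apply_left, hsw b hbS] at hab
          exact absurd hab.symm (hy b hbS).symm
        · rw [Equiv.swap_apply_left, hsw a haS] at hab
          exact absurd hab (hy a haS).symm
        · rw [hsw a haS, hsw b hbS] at hab
          exact hsh a haS b hbS hab
    · rintro ⟨π₁, y₁⟩ h₁ ⟨π₂, y₂⟩ h₂ heq
      simp only [Prod.mk.injEq] at heq
      obtain ⟨hfun, hyeq⟩ := heq
      subst hyeq
      have : π₁ = π₂ := by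
        funext i
        have := congrFun hfun (Equiv.swap x y₁ i)
        simpa [Equiv.swap_apply_self] using this
      subst this
      rfl
  rw [hcard] at *
  calc P.card * ((T - S.card) * (m / T)) ≤ (Q ×ˢ (univ : Finset (Fin m))).card := hinj
    _ = Q.card * m := by rw [Finset.card_product]; simp

lemma shat_lower (m T : ℕ) (hT : 0 < T) (hdvd : T ∣ m) :
    ∀ S : Finset (Fin m), S.card ≤ T →
    (∏ i ∈ range S.card, ((T:ℝ) - i)/T) * ((PartsF m T).card : ℝ)
      ≤ ((ShatF m T S).card : ℝ) := by
  intro S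
  induction S using Finset.induction_on with
  | empty =>
    intro _
    rw [Finset.card_empty]
    simp only [range_zero, prod_empty, one_mul]
    have : ShatF m T ∅ = PartsF m T := by
      rw [ShatF]
      apply Finset.filter_true_of_mem
      intro π _ a ha
      exact absurd ha (Finset.notMem_empty a)
    rw [this]
  | @insert x S hx ih =>
    intro hcard
    rw [Finset.card_insert_of_notMem hx] at *
    have hk : S.card < T := hcard
    have hm : m = T * (m / T) := (Nat.div_mul_cancel hdvd).symm.trans (Nat.mul_comm _ _)
    have hmpos : 0 < m := x.pos
    have hnpos : 0 < m / T := by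
      rcases Nat.eq_zero_or_pos (m / T) with h | h
      · rw [h, Nat.mul_zero] at hm; omega
      · exact h
    -- step lemma, cast to ℝ
    have hstep := step (T := T) x S hx
    have hstepR : ((ShatF m T S).card : ℝ) * (((T:ℝ) - S.card) * (m / T : ℕ)) ≤
        ((ShatF m T (insert x S)).card : ℝ) * m := by
      have := Nat.cast_le (α := ℝ) |>.mpr hstep
      push_cast at this
      rwa [Nat.cast_sub hk.le] at this
      -- careful: push_cast may have already handled the subtraction poorly
    have hTpos : (0:ℝ) < T := by exact_mod_cast hT
    have hnposR : (0:ℝ) < (m / T : ℕ) := by exact_mod_cast hnpos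
    have hmR : (m:ℝ) = T * (m / T : ℕ) := by exact_mod_cast hm
    rw [Finset.prod_range_succ]
    have hfrac : (0:ℝ) ≤ ((T:ℝ) - S.card)/T := by
      apply div_nonneg _ hTpos.le
      have : (S.card : ℝ) ≤ T := by exact_mod_cast hk.le
      linarith
    calc (∏ i ∈ range S.card, ((T:ℝ) - i)/T) * (((T:ℝ) - S.card)/T) * ((PartsF m T).card : ℝ)
        = (((T:ℝ) - S.card)/T) * ((∏ i ∈ range S.card, ((T:ℝ) - i)/T) * ((PartsF m T).card : ℝ)) := by ring
      _ ≤ (((T:ℝ) - S.card)/T) * ((ShatF m T S).card : ℝ) :=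
          mul_le_mul_of_nonneg_left (ih hk.le) hfrac
      _ ≤ ((ShatF m T (insert x S)).card : ℝ) := by
          rw [div_mul_eq_mul_div, div_le_iff₀ hTpos]
          have h2 : ((ShatF m T S).card : ℝ) * (((T:ℝ) - S.card) * (m / T : ℕ)) ≤
              ((ShatF m T (insert x S)).card : ℝ) * ((T:ℝ) * (m / T : ℕ)) := by
            rw [← hmR]; exact hstepR
          nlinarith [hnposR]

lemma prod_range_sub_factorial (n : ℕ) : ∏ i ∈ range n, (n - i) = n.factorial := by
  induction n with
  | zero => simp
  | succ n ih =>
    rw [Finset.prod_range_succ']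
    simp only [Nat.succ_sub_succ_eq_sub, Nat.sub_zero]
    rw [ih, Nat.factorial_succ, Nat.mul_comm]

lemma exp_le_prod (T k : ℕ) (hT : 0 < T) (hk : k ≤ T) :
    Real.exp (-(T:ℝ)) ≤ ∏ i ∈ range k, ((T:ℝ) - i)/T := by
  have hfacnn : ∀ i ∈ range T, (0:ℝ) ≤ ((T:ℝ) - i)/T := by
    intro i hi
    have : (i:ℝ) ≤ T := by
      have := (mem_range.mp hi).le
      exact_mod_cast this
    have hTpos : (0:ℝ) < T := by exact_mod_cast hT
    apply div_nonneg _ hTpos.le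
    linarith
  have hTpos : (0:ℝ) < T := by exact_mod_cast hT
  -- prod over range T ≤ prod over range k
  have hsplit : (∏ i ∈ range k, ((T:ℝ) - i)/T) * (∏ i ∈ Ico k T, ((T:ℝ) - i)/T)
      = ∏ i ∈ range T, ((T:ℝ) - i)/T := Finset.prod_range_mul_prod_Ico _ hk
  have hico_le_one : (∏ i ∈ Ico k T, ((T:ℝ) - i)/T) ≤ 1 := by
    apply Finset.prod_le_one
    · intro i hi
      exact hfacnn i (mem_range.mpr (mem_Ico.mp hi).2)
    · intro i hi
      have hiT : (i:ℝ) ≥ 0 := by positivity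
      rw [div_le_one hTpos]
      linarith
  have hico_nn : (0:ℝ) ≤ ∏ i ∈ Ico k T, ((T:ℝ) - i)/T :=
    Finset.prod_nonneg (fun i hi => hfacnn i (mem_range.mpr (mem_Ico.mp hi).2))
  have hk_nn : (0:ℝ) ≤ ∏ i ∈ range k, ((T:ℝ) - i)/T :=
    Finset.prod_nonneg (fun i hi => hfacnn i (mem_range.mpr ((mem_range.mp hi).trans_le hk)))
  have h1 : ∏ i ∈ range T, ((T:ℝ) - i)/T ≤ ∏ i ∈ range k, ((T:ℝ) - i)/T := by
    rw [← hsplit]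
    nlinarith
  refine le_trans ?_ h1
  -- prod over range T = T!/T^T
  have h2 : ∏ i ∈ range T, ((T:ℝ) - i)/T = (T.factorial : ℝ) / (T:ℝ)^T := by
    rw [Finset.prod_div_distrib, Finset.prod_const, card_range]
    congr 1
    rw [← prod_range_sub_factorial T, Nat.cast_prod]
    exact Finset.prod_congr rfl (fun i hi => (Nat.cast_sub (mem_range.mp hi).le).symm)
  rw [h2]
  rw [Real.exp_neg, inv_eq_one_div, div_le_div_iff₀ (Real.exp_pos _) (by positivity)]
  have := pow_le_factorial_mul_exp T
  nlinarith [Real.exp_pos (T:ℝ)]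

lemma prob_shat (m T : ℕ) (hT : 0 < T) (hdvd : T ∣ m) (S : Finset (Fin m)) (hS : S.card ≤ T) :
    Real.exp (-(T:ℝ)) * ((PartsF m T).card : ℝ) ≤ ((ShatF m T S).card : ℝ) :=
  le_trans (mul_le_mul_of_nonneg_right (exp_le_prod T S.card hT hS) (by positivity))
    (shat_lower m T hT hdvd S hS)


/-- For a multilinear polynomial given by a family C of monomials (subsets of [m]) each
of degree at most T, where T divides m, a uniformly random equipartition of [m] into T
blocks shatters at least 0.5·|C|·exp(−T) of the monomials with probability at least
exp(−2T). Probabilities over the uniform equipartition are expressed by counting. -/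
theorem stmt19 (m T : ℕ) (hT : 0 < T) (hdvd : T ∣ m)
    (C : Finset (Finset (Fin m))) (hC : ∀ S ∈ C, S.card ≤ T) :
    let Parts : Finset (Fin m → Fin T) :=
      Finset.univ.filter
        (fun π => ∀ j : Fin T, (Finset.univ.filter (fun i => π i = j)).card = m / T)
    let shattered : (Fin m → Fin T) → ℕ := fun π =>
      (C.filter (fun S => ∀ j : Fin T, (S.filter (fun i => π i = j)).card ≤ 1)).card
    Real.exp (-2 * (T : ℝ)) * (Parts.card : ℝ) ≤
      ((Parts.filter (fun π =>
          0.5 * (C.card : ℝ) * Real.exp (-(T : ℝ)) ≤ (shattered π : ℝ))).card : ℝ) := by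
  intro Parts shattered
  have hPartsEq : Parts = PartsF m T := rfl
  have hshat : ∀ π, shattered π = (C.filter (fun S => sh π S)).card := fun π =>
    congrArg Finset.card (Finset.filter_congr (fun S _ => by simpa using sh_iff π S))
  set q : ℝ := Real.exp (-(T:ℝ)) with hq
  set μ : ℝ := (C.card : ℝ) with hμ
  set Pc : ℝ := (Parts.card : ℝ) with hPc
  set G := Parts.filter (fun π => 0.5 * μ * q ≤ (shattered π : ℝ)) with hG
  -- double counting
  have hdouble : ∑ π ∈ Parts, (shattered π : ℝ) = ∑ S ∈ C, ((ShatF m T S).card : ℝ) := by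
    have : ∑ π ∈ Parts, shattered π = ∑ S ∈ C, (ShatF m T S).card := by
      simp_rw [hshat, ShatF, ← hPartsEq, Finset.card_filter]
      exact Finset.sum_comm
    exact_mod_cast congrArg (Nat.cast : ℕ → ℝ) this
  -- lower bound on the sum
  have hlow : q * μ * Pc ≤ ∑ π ∈ Parts, (shattered π : ℝ) := by
    rw [hdouble]
    calc q * μ * Pc = ∑ _S ∈ C, q * Pc := by rw [Finset.sum_const, nsmul_eq_mul]; ring
      _ ≤ ∑ S ∈ C, ((ShatF m T S).card : ℝ) := by
          apply Finset.sum_le_sum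
          intro S hS
          rw [hq, hPc, hPartsEq]
          exact prob_shat m T hT hdvd S (hC S hS)
  -- upper bound on the sum
  have hμnn : (0:ℝ) ≤ μ := by positivity
  have hqnn : (0:ℝ) ≤ q := Real.exp_nonneg _
  have hup : ∑ π ∈ Parts, (shattered π : ℝ) ≤ (G.card : ℝ) * μ + Pc * (0.5 * μ * q) := by
    rw [← Finset.sum_filter_add_sum_filter_not Parts
      (fun π => 0.5 * μ * q ≤ (shattered π : ℝ))]
    apply add_le_add
    · calc ∑ π ∈ G, (shattered π : ℝ) ≤ ∑ _π ∈ G, μ := by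
            apply Finset.sum_le_sum
            intro π _
            rw [hμ]
            exact_mod_cast Finset.card_filter_le _ _
        _ = (G.card : ℝ) * μ := by rw [Finset.sum_const, nsmul_eq_mul]
    · calc ∑ π ∈ Parts.filter (fun π => ¬ (0.5 * μ * q ≤ (shattered π : ℝ))), (shattered π : ℝ)
          ≤ ∑ _π ∈ Parts.filter (fun π => ¬ (0.5 * μ * q ≤ (shattered π : ℝ))), (0.5 * μ * q) := by
            apply Finset.sum_le_sum
            intro π hπ
            exact (lt_of_not_ge (mem_filter.mp hπ).2).le
        _ ≤ Pc * (0.5 * μ * q) := by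
            rw [Finset.sum_const, nsmul_eq_mul]
            apply mul_le_mul_of_nonneg_right _ (by positivity)
            rw [hPc]
            exact_mod_cast Finset.card_filter_le _ _
  -- combine
  have hkey : μ * (0.5 * q * Pc) ≤ μ * (G.card : ℝ) := by nlinarith
  have hPcnn : (0:ℝ) ≤ Pc := by positivity
  have hexp2 : Real.exp (-2 * (T:ℝ)) ≤ 0.5 * q := by
    have h1 : Real.exp (-(T:ℝ)) ≤ Real.exp (-1 : ℝ) := by
      apply Real.exp_le_exp.mpr
      have : (1:ℝ) ≤ T := by exact_mod_cast hT
      linarith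
    have h2 : Real.exp (-1 : ℝ) ≤ 0.5 := by
      rw [Real.exp_neg]
      rw [inv_le_comm₀ (Real.exp_pos 1) (by norm_num)]
      have := Real.add_one_le_exp (1:ℝ)
      linarith
    have : Real.exp (-2 * (T:ℝ)) = Real.exp (-(T:ℝ)) * Real.exp (-(T:ℝ)) := by
      rw [← Real.exp_add]; ring_nf
    rw [this, hq]
    nlinarith [Real.exp_nonneg (-(T:ℝ))]
  rcases eq_or_lt_of_le hμnn with hzero | hpos
  · -- C empty
    have hGall : G = Parts := by
      rw [hG]
      apply Finset.filter_true_of_mem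
      intro π _
      rw [← hzero]
      have := Nat.cast_nonneg (α := ℝ) (shattered π)
      linarith
    rw [hGall]
    have : Real.exp (-2 * (T:ℝ)) ≤ 1 := by
      rw [Real.exp_le_one_iff]
      have : (0:ℝ) ≤ T := by positivity
      linarith
    nlinarith
  · have h05 : 0.5 * q * Pc ≤ (G.card : ℝ) := le_of_mul_le_mul_left hkey hpos
    calc Real.exp (-2 * (T:ℝ)) * Pc ≤ (0.5 * q) * Pc :=
          mul_le_mul_of_nonneg_right hexp2 hPcnn
      _ ≤ (G.card : ℝ) := by rw [mul_assoc] at h05 ⊢; exact h05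
end
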